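/- arXiv:2105.10476 — 2 statements merged into one kernel-verified Lean document; each statement's English description precedes it below -/
import Mathlib

section
/- With p(λ) expanded as Σ_p α_p Π_m e^{-λ_m} λ_m^{β_{p,m}} as above, for each term p and each integer N with 0 ≤ N < n, the partial degree satisfies B_p^{(N)} = Σ_{j=N+1}^n β_{p,j} ≥ Σ_{j=0}^{n−N−1}(d + 2j), i.e., the minimum over p of B_p^{(N)} equals (n−N)d + (n−N)(n−N−1). -/
open MvPolynomial

namespace WishartAux

variable {n : ℕ}

/-- weighted degree: sum of exponents over indices ≥ N -/
def wdeg (N : ℕ) {n : ℕ} (β : Fin n →₀ ℕ) : ℕ :=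
  ∑ j ∈ Finset.univ.filter (fun j : Fin n => N ≤ (j : ℕ)), β j

lemma wdeg_add (N : ℕ) (a b : Fin n →₀ ℕ) : wdeg N (a + b) = wdeg N a + wdeg N b := by
  simp [wdeg, Finset.sum_add_distrib]

@[simp] lemma wdeg_zero (N : ℕ) : wdeg N (0 : Fin n →₀ ℕ) = 0 := by
  simp [wdeg]

lemma wdeg_single (N : ℕ) (m : Fin n) (k : ℕ) :
    wdeg N (Finsupp.single m k) = if N ≤ (m : ℕ) then k else 0 := by
  classical
  simp only [wdeg, Finsupp.single_apply]
  rw [Finset.sum_ite_eq]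
  simp

noncomputable def minpart (N : ℕ) {n : ℕ} (f : MvPolynomial (Fin n) ℤ) (a : ℕ) :
    MvPolynomial (Fin n) ℤ :=
  ∑ β ∈ f.support.filter (fun β => wdeg N β = a), monomial β (coeff β f)

lemma coeff_minpart (N : ℕ) (f : MvPolynomial (Fin n) ℤ) (a : ℕ) (β : Fin n →₀ ℕ) :
    coeff β (minpart N f a) = if wdeg N β = a then coeff β f else 0 := by
  classical
  rw [minpart, coeff_sum]
  simp only [coeff_monomial]
  rw [Finset.sum_ite_eq']
  simp only [Finset.mem_filter, mem_support_iff]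
  by_cases h1 : wdeg N β = a
  · by_cases h2 : coeff β f = 0 <;> simp [h1, h2]
  · simp [h1]

lemma minpart_of_homog {N a : ℕ} {f : MvPolynomial (Fin n) ℤ}
    (h : ∀ β ∈ f.support, wdeg N β = a) : minpart N f a = f := by
  ext β
  rw [coeff_minpart]
  by_cases hβ : wdeg N β = a
  · simp [hβ]
  · have : coeff β f = 0 := by
      by_contra hc
      exact hβ (h β (mem_support_iff.mpr hc))
    simp [hβ, this]

lemma minpart_eq_zero {N a : ℕ} {f : MvPolynomial (Fin n) ℤ}
    (h : ∀ β ∈ f.support, wdeg N β ≠ a) : minpart N f a = 0 := by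
  ext β
  rw [coeff_minpart]
  by_cases hβ : wdeg N β = a
  · have : coeff β f = 0 := by
      by_contra hc
      exact h β (mem_support_iff.mpr hc) hβ
    simp [hβ, this]
  · simp [hβ]

lemma minpart_sub (N a : ℕ) (f g : MvPolynomial (Fin n) ℤ) :
    minpart N (f - g) a = minpart N f a - minpart N g a := by
  ext β
  simp only [coeff_minpart, coeff_sub]
  split <;> simp

lemma mul_lower {N a b : ℕ} {f g : MvPolynomial (Fin n) ℤ}
    (hf : ∀ β ∈ f.support, a ≤ wdeg N β) (hg : ∀ β ∈ g.support, b ≤ wdeg N β) :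
    ∀ β ∈ (f * g).support, a + b ≤ wdeg N β := by
  classical
  intro β hβ
  have hm := MvPolynomial.support_mul f g hβ
  rw [Finset.mem_add] at hm
  obtain ⟨b1, hb1, b2, hb2, rfl⟩ := hm
  rw [wdeg_add]
  exact Nat.add_le_add (hf _ hb1) (hg _ hb2)

lemma minpart_mul {N a b : ℕ} {f g : MvPolynomial (Fin n) ℤ}
    (hf : ∀ β ∈ f.support, a ≤ wdeg N β) (hg : ∀ β ∈ g.support, b ≤ wdeg N β) :
    minpart N (f * g) (a + b) = minpart N f a * minpart N g b := by
  classical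
  ext β
  rw [coeff_minpart, coeff_mul, coeff_mul]
  by_cases hβ : wdeg N β = a + b
  · rw [if_pos hβ]
    apply Finset.sum_congr rfl
    intro x hx
    rw [Finset.HasAntidiagonal.mem_antidiagonal] at hx
    have hsum : wdeg N x.1 + wdeg N x.2 = a + b := by
      rw [← wdeg_add, hx, hβ]
    rw [coeff_minpart, coeff_minpart]
    by_cases h1 : wdeg N x.1 = a
    · have h2 : wdeg N x.2 = b := by omega
      rw [if_pos h1, if_pos h2]
    · rw [if_neg h1]
      rcases lt_or_ge (wdeg N x.1) a with h | h
      · have hz : coeff x.1 f = 0 := by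
          by_contra hc
          exact absurd (hf x.1 (mem_support_iff.mpr hc)) (not_le.mpr h)
        rw [hz, zero_mul, zero_mul]
      · have hlt : wdeg N x.2 < b := by omega
        have hz : coeff x.2 g = 0 := by
          by_contra hc
          exact absurd (hg x.2 (mem_support_iff.mpr hc)) (not_le.mpr hlt)
        rw [hz, mul_zero, zero_mul]
  · rw [if_neg hβ]
    symm
    apply Finset.sum_eq_zero
    intro x hx
    rw [Finset.HasAntidiagonal.mem_antidiagonal] at hx
    rw [coeff_minpart, coeff_minpart]
    by_cases h1 : wdeg N x.1 = a
    · by_cases h2 : wdeg N x.2 = b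
      · exfalso
        apply hβ
        rw [← hx, wdeg_add, h1, h2]
      · rw [if_neg h2, mul_zero]
    · rw [if_neg h1, zero_mul]

lemma prod_minpart {ι : Type*} (N : ℕ) (s : Finset ι) (f : ι → MvPolynomial (Fin n) ℤ)
    (a : ι → ℕ) (h : ∀ i ∈ s, ∀ β ∈ (f i).support, a i ≤ wdeg N β) :
    (∀ β ∈ (∏ i ∈ s, f i).support, (∑ i ∈ s, a i) ≤ wdeg N β) ∧
      minpart N (∏ i ∈ s, f i) (∑ i ∈ s, a i) = ∏ i ∈ s, minpart N (f i) (a i) := by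
  classical
  induction s using Finset.cons_induction with
  | empty =>
    constructor
    · intro β hβ
      simp
    · simp only [Finset.prod_empty, Finset.sum_empty]
      ext β
      rw [coeff_minpart]
      by_cases hβ : wdeg N β = 0
      · simp [hβ]
      · have : β ≠ 0 := by rintro rfl; simp at hβ
        rw [if_neg hβ, coeff_one, if_neg (by simpa using (Ne.symm this))]
  | cons i s his ih =>
    have hi := h i (Finset.mem_cons_self i s)
    have hrest := ih (fun j hj => h j (Finset.mem_cons_of_mem hj))
    rw [Finset.prod_cons, Finset.sum_cons]
    exact ⟨mul_lower hi hrest.1, by rw [minpart_mul hi hrest.1, hrest.2, Finset.prod_cons]⟩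

lemma supp_Xpow (N d : ℕ) (m : Fin n) :
    ∀ β ∈ ((X m : MvPolynomial (Fin n) ℤ) ^ d).support,
      wdeg N β = (if N ≤ (m : ℕ) then d else 0) := by
  intro β hβ
  rw [MvPolynomial.support_X_pow, Finset.mem_singleton] at hβ
  subst hβ
  exact wdeg_single N m d

lemma mem_pair_support {a b : Fin n} {β : Fin n →₀ ℕ}
    (hβ : β ∈ ((X a - X b : MvPolynomial (Fin n) ℤ) ^ 2).support) :
    ∃ c1 ∈ ({a, b} : Finset (Fin n)), ∃ c2 ∈ ({a, b} : Finset (Fin n)),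
      β = Finsupp.single c1 1 + Finsupp.single c2 1 := by
  classical
  rw [pow_two] at hβ
  have h1 := MvPolynomial.support_mul _ _ hβ
  rw [Finset.mem_add] at h1
  obtain ⟨b1, hb1, b2, hb2, rfl⟩ := h1
  have hs : (X a - X b : MvPolynomial (Fin n) ℤ).support ⊆
      {Finsupp.single a 1, Finsupp.single b 1} := by
    refine (MvPolynomial.support_sub _ _ _).trans ?_
    rw [support_X, support_X]
    intro x hx
    simpa using hx
  have h1 := hs hb1
  have h2 := hs hb2
  simp only [Finset.mem_insert, Finset.mem_singleton] at h1 h2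
  rcases h1 with rfl | rfl <;> rcases h2 with rfl | rfl <;>
    first
      | exact ⟨a, by simp, a, by simp, rfl⟩
      | exact ⟨a, by simp, b, by simp, rfl⟩
      | exact ⟨b, by simp, a, by simp, rfl⟩
      | exact ⟨b, by simp, b, by simp, rfl⟩

lemma pair_homog_two {N : ℕ} {a b : Fin n} (ha : N ≤ (a : ℕ)) (hb : N ≤ (b : ℕ)) :
    ∀ β ∈ ((X a - X b : MvPolynomial (Fin n) ℤ) ^ 2).support, wdeg N β = 2 := by
  intro β hβ
  obtain ⟨c1, hc1, c2, hc2, rfl⟩ := mem_pair_support hβ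
  simp only [Finset.mem_insert, Finset.mem_singleton] at hc1 hc2
  rw [wdeg_add, wdeg_single, wdeg_single]
  rcases hc1 with rfl | rfl <;> rcases hc2 with rfl | rfl <;> simp [ha, hb]

lemma pair_homog_zero {N : ℕ} {a b : Fin n} (ha : ¬ N ≤ (a : ℕ)) (hb : ¬ N ≤ (b : ℕ)) :
    ∀ β ∈ ((X a - X b : MvPolynomial (Fin n) ℤ) ^ 2).support, wdeg N β = 0 := by
  intro β hβ
  obtain ⟨c1, hc1, c2, hc2, rfl⟩ := mem_pair_support hβ
  simp only [Finset.mem_insert, Finset.mem_singleton] at hc1 hc2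
  rw [wdeg_add, wdeg_single, wdeg_single]
  rcases hc1 with rfl | rfl <;> rcases hc2 with rfl | rfl <;> simp [ha, hb]

lemma minpart_pair_mixed {N : ℕ} {a b : Fin n} (ha : N ≤ (a : ℕ)) (hb : ¬ N ≤ (b : ℕ)) :
    minpart N ((X a - X b : MvPolynomial (Fin n) ℤ) ^ 2) 0 = X b ^ 2 := by
  classical
  have hexp : (X a - X b : MvPolynomial (Fin n) ℤ) ^ 2
      = (X a ^ 2 - X a * X b) - (X a * X b - X b ^ 2) := by ring
  rw [hexp, minpart_sub, minpart_sub, minpart_sub]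
  have hXa : minpart N ((X a : MvPolynomial (Fin n) ℤ) ^ 2) 0 = 0 := by
    apply minpart_eq_zero
    intro β hβ
    rw [MvPolynomial.support_X_pow, Finset.mem_singleton] at hβ
    subst hβ
    rw [wdeg_single, if_pos ha]
    omega
  have hXab : minpart N ((X a : MvPolynomial (Fin n) ℤ) * X b) 0 = 0 := by
    apply minpart_eq_zero
    intro β hβ
    have h1 := MvPolynomial.support_mul (X a : MvPolynomial (Fin n) ℤ) (X b) hβ
    rw [Finset.mem_add] at h1
    obtain ⟨b1, hb1, b2, hb2, rfl⟩ := h1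
    rw [support_X, Finset.mem_singleton] at hb1 hb2
    subst hb1; subst hb2
    rw [wdeg_add, wdeg_single, wdeg_single, if_pos ha, if_neg hb]
    omega
  have hXb : minpart N ((X b : MvPolynomial (Fin n) ℤ) ^ 2) 0 = X b ^ 2 := by
    apply minpart_of_homog
    intro β hβ
    rw [MvPolynomial.support_X_pow, Finset.mem_singleton] at hβ
    subst hβ
    rw [wdeg_single, if_neg hb]
  rw [hXa, hXab, hXb]
  ring

lemma sumA (N d : ℕ) : ∀ k, (∑ m ∈ Finset.range k, if N ≤ m then d else 0) = (k - N) * d := by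
  intro k
  induction k with
  | zero => simp
  | succ k ih =>
    rw [Finset.sum_range_succ, ih]
    by_cases h : N ≤ k
    · rw [if_pos h, show k + 1 - N = (k - N) + 1 by omega]
      ring
    · rw [if_neg h, show k + 1 - N = 0 by omega, show k - N = 0 by omega]
      ring

lemma sumB (N : ℕ) :
    ∀ k, (∑ x ∈ Finset.range k, ∑ y ∈ Finset.range k, if y < x ∧ N ≤ y then 2 else 0)
      = (k - N) * (k - N - 1) := by
  intro k
  induction k with
  | zero => simp
  | succ k ih =>
    rw [Finset.sum_range_succ]
    have hinner : ∀ x ∈ Finset.range k,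
        (∑ y ∈ Finset.range (k + 1), if y < x ∧ N ≤ y then 2 else 0)
          = ∑ y ∈ Finset.range k, if y < x ∧ N ≤ y then 2 else 0 := by
      intro x hx
      rw [Finset.mem_range] at hx
      rw [Finset.sum_range_succ, if_neg (by omega), add_zero]
    rw [Finset.sum_congr rfl hinner, ih]
    have hlast : (∑ y ∈ Finset.range (k + 1), if y < k ∧ N ≤ y then 2 else 0)
        = (k - N) * 2 := by
      rw [Finset.sum_range_succ, if_neg (by omega), add_zero]
      have h2 : ∀ y ∈ Finset.range k, (if y < k ∧ N ≤ y then 2 else 0)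
          = if N ≤ y then 2 else 0 := by
        intro y hy
        rw [Finset.mem_range] at hy
        simp [hy]
      rw [Finset.sum_congr rfl h2, sumA N 2 k]
    rw [hlast]
    rcases Nat.lt_or_ge k N with h | h
    · rw [show k - N = 0 by omega, show k + 1 - N = 0 by omega]
    · obtain ⟨t, rfl⟩ : ∃ t, k = N + t := ⟨k - N, by omega⟩
      rw [show N + t - N = t by omega, show N + t + 1 - N = t + 1 by omega]
      cases t with
      | zero => simp
      | succ t =>
        simp only [Nat.succ_sub_one]
        ring

end WishartAux

open WishartAux

/-- For the expanded polynomial `Π_m X_m^d · Π_{m>m'} (X_m − X_{m'})²`, every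
monomial `β` in its support has partial degree `B^{(N)} = Σ_{j=N+1}^n β_j` at least
`Σ_{j=0}^{n−N−1} (d + 2j)`, and the minimum over monomials of `B^{(N)}` equals
`(n−N)d + (n−N)(n−N−1)`. -/
theorem wishart_partial_degree_min (n d N : ℕ) (hn : N < n) :
    (∀ β ∈ ((∏ m : Fin n, (X m : MvPolynomial (Fin n) ℤ) ^ d) *
        ∏ q ∈ Finset.univ.filter (fun q : Fin n × Fin n => q.2 < q.1),
          (X q.1 - X q.2) ^ 2).support,
      (n - N) * d + (n - N) * (n - N - 1) ≤
        ∑ j ∈ Finset.univ.filter (fun j : Fin n => N ≤ (j : ℕ)), β j) ∧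
    (∃ β ∈ ((∏ m : Fin n, (X m : MvPolynomial (Fin n) ℤ) ^ d) *
        ∏ q ∈ Finset.univ.filter (fun q : Fin n × Fin n => q.2 < q.1),
          (X q.1 - X q.2) ^ 2).support,
      ∑ j ∈ Finset.univ.filter (fun j : Fin n => N ≤ (j : ℕ)), β j =
        (n - N) * d + (n - N) * (n - N - 1)) := by
  classical
  set pr : Finset (Fin n × Fin n) :=
    Finset.univ.filter (fun q : Fin n × Fin n => q.2 < q.1) with hpr
  -- bounds for the two families of factors
  have hFb : ∀ m ∈ (Finset.univ : Finset (Fin n)),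
      ∀ β ∈ ((X m : MvPolynomial (Fin n) ℤ) ^ d).support,
        (if N ≤ (m : ℕ) then d else 0) ≤ wdeg N β :=
    fun m _ β hβ => le_of_eq (supp_Xpow N d m β hβ).symm
  have hGb : ∀ q ∈ pr, ∀ β ∈ ((X q.1 - X q.2 : MvPolynomial (Fin n) ℤ) ^ 2).support,
      (if N ≤ (q.2 : ℕ) then 2 else 0) ≤ wdeg N β := by
    intro q hq β hβ
    by_cases h2 : N ≤ (q.2 : ℕ)
    · have hlt : (q.2 : ℕ) < (q.1 : ℕ) := (Finset.mem_filter.mp hq).2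
      have h1 : N ≤ (q.1 : ℕ) := le_trans h2 (le_of_lt hlt)
      rw [if_pos h2, pair_homog_two h1 h2 β hβ]
    · rw [if_neg h2]
      exact Nat.zero_le _
  have hF := prod_minpart N Finset.univ (fun m : Fin n => (X m : MvPolynomial (Fin n) ℤ) ^ d)
    (fun m => if N ≤ (m : ℕ) then d else 0) hFb
  have hG := prod_minpart N pr (fun q => (X q.1 - X q.2 : MvPolynomial (Fin n) ℤ) ^ 2)
    (fun q => if N ≤ (q.2 : ℕ) then 2 else 0) hGb
  -- the numerical value of the total minimal weight
  have hA : (∑ m : Fin n, if N ≤ (m : ℕ) then d else 0) = (n - N) * d := by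
    rw [Fin.sum_univ_eq_sum_range (fun i => if N ≤ i then d else 0) n]
    exact sumA N d n
  have hB : (∑ q ∈ pr, if N ≤ (q.2 : ℕ) then 2 else 0) = (n - N) * (n - N - 1) := by
    rw [hpr, Finset.sum_filter, Fintype.sum_prod_type]
    have hstep : ∀ x : Fin n, (∑ y : Fin n,
        if (x, y).2 < (x, y).1 then (if N ≤ ((x, y).2 : ℕ) then 2 else 0) else 0)
          = ∑ y ∈ Finset.range n, if y < (x : ℕ) ∧ N ≤ y then 2 else 0 := by
      intro x
      rw [← Fin.sum_univ_eq_sum_range (fun y => if y < (x : ℕ) ∧ N ≤ y then 2 else 0) n]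
      apply Finset.sum_congr rfl
      intro y _
      by_cases h1 : (y : ℕ) < (x : ℕ) <;> by_cases h2 : N ≤ (y : ℕ) <;>
        simp [Fin.lt_def, h1, h2]
    rw [Finset.sum_congr rfl (fun x _ => hstep x)]
    rw [Fin.sum_univ_eq_sum_range
      (fun x => ∑ y ∈ Finset.range n, if y < x ∧ N ≤ y then 2 else 0) n]
    exact sumB N n
  have hK : (∑ m : Fin n, if N ≤ (m : ℕ) then d else 0) +
      (∑ q ∈ pr, if N ≤ (q.2 : ℕ) then 2 else 0)
        = (n - N) * d + (n - N) * (n - N - 1) := by rw [hA, hB]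
  have hlow := mul_lower hF.1 hG.1
  constructor
  · intro β hβ
    have h := hlow β hβ
    rw [hK] at h
    exact h
  · -- existence
    have hmul := minpart_mul hF.1 hG.1
    -- values of the minimal parts
    have hFval : minpart N (∏ m : Fin n, (X m : MvPolynomial (Fin n) ℤ) ^ d)
        (∑ m : Fin n, if N ≤ (m : ℕ) then d else 0)
          = ∏ m : Fin n, (X m : MvPolynomial (Fin n) ℤ) ^ d := by
      rw [hF.2]
      exact Finset.prod_congr rfl (fun m _ => minpart_of_homog (supp_Xpow N d m))
    have hGval : minpart N (∏ q ∈ pr, (X q.1 - X q.2 : MvPolynomial (Fin n) ℤ) ^ 2)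
        (∑ q ∈ pr, if N ≤ (q.2 : ℕ) then 2 else 0)
          = ∏ q ∈ pr, (if N ≤ (q.2 : ℕ) then (X q.1 - X q.2 : MvPolynomial (Fin n) ℤ) ^ 2
              else if N ≤ (q.1 : ℕ) then (X q.2 : MvPolynomial (Fin n) ℤ) ^ 2
              else (X q.1 - X q.2 : MvPolynomial (Fin n) ℤ) ^ 2) := by
      rw [hG.2]
      refine Finset.prod_congr rfl ?_
      intro q hq
      have hlt : (q.2 : ℕ) < (q.1 : ℕ) := (Finset.mem_filter.mp hq).2
      show minpart N ((X q.1 - X q.2 : MvPolynomial (Fin n) ℤ) ^ 2)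
          (if N ≤ (q.2 : ℕ) then 2 else 0)
        = if N ≤ (q.2 : ℕ) then (X q.1 - X q.2 : MvPolynomial (Fin n) ℤ) ^ 2
            else if N ≤ (q.1 : ℕ) then (X q.2 : MvPolynomial (Fin n) ℤ) ^ 2
            else (X q.1 - X q.2 : MvPolynomial (Fin n) ℤ) ^ 2
      by_cases h2 : N ≤ (q.2 : ℕ)
      · have h1 : N ≤ (q.1 : ℕ) := le_trans h2 (le_of_lt hlt)
        rw [if_pos h2, if_pos h2]
        exact minpart_of_homog (pair_homog_two h1 h2)
      · rw [if_neg h2, if_neg h2]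
        by_cases h1 : N ≤ (q.1 : ℕ)
        · rw [if_pos h1]
          exact minpart_pair_mixed h1 h2
        · rw [if_neg h1]
          exact minpart_of_homog (pair_homog_zero h1 h2)
    have hne : minpart N ((∏ m : Fin n, (X m : MvPolynomial (Fin n) ℤ) ^ d) *
        ∏ q ∈ pr, (X q.1 - X q.2 : MvPolynomial (Fin n) ℤ) ^ 2)
        ((∑ m : Fin n, if N ≤ (m : ℕ) then d else 0) +
          (∑ q ∈ pr, if N ≤ (q.2 : ℕ) then 2 else 0)) ≠ 0 := by
      rw [hmul, hFval, hGval]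
      apply mul_ne_zero
      · exact Finset.prod_ne_zero_iff.mpr (fun m _ => pow_ne_zero _ (X_ne_zero m))
      · refine Finset.prod_ne_zero_iff.mpr ?_
        intro q hq
        have hlt : q.2 < q.1 := (Finset.mem_filter.mp hq).2
        have hXne : (X q.1 - X q.2 : MvPolynomial (Fin n) ℤ) ≠ 0 :=
          sub_ne_zero.mpr (X_injective.ne (ne_of_gt hlt))
        split_ifs with h2 h1
        · exact pow_ne_zero _ hXne
        · exact pow_ne_zero _ (X_ne_zero _)
        · exact pow_ne_zero _ hXne
    obtain ⟨β, hβ⟩ := MvPolynomial.ne_zero_iff.mp hne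
    rw [coeff_minpart] at hβ
    by_cases hw : wdeg N β = (∑ m : Fin n, if N ≤ (m : ℕ) then d else 0) +
        (∑ q ∈ pr, if N ≤ (q.2 : ℕ) then 2 else 0)
    · rw [if_pos hw] at hβ
      exact ⟨β, mem_support_iff.mpr hβ, hw.trans hK⟩
    · rw [if_neg hw] at hβ
      exact absurd rfl hβ
end

section
/- For a nested double integral ∫_0^∞ e^{-(1+a₂)λ₂} λ₂^{β₂} (∫_{λ₂}^∞ e^{-(1+a₁)λ₁} λ₁^{β₁} dλ₁) dλ₂ with a₁, a₂ ≥ 0 and nonnegative integers β₁, β₂, the value equals (β₁!/(1+a₁)^{β₁+1}) Σ_{i=0}^{β₁} ((i+β₂)!/i!) (1+a₁)^i / (2 + a₁ + a₂)^{β₂+i+1}. -/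
open Real Set Filter MeasureTheory Finset

lemma alg_id (c t : ℝ) (hc : c ≠ 0) (n : ℕ) :
    c * (∑ j ∈ Finset.range (n+1), (n.factorial / j.factorial : ℝ) * t ^ j / c ^ (n + 1 - j))
      - ∑ j ∈ Finset.range (n+1),
          (n.factorial / j.factorial : ℝ) * ((j : ℝ) * t ^ (j - 1)) / c ^ (n + 1 - j)
      = t ^ n := by
  rw [Finset.mul_sum, Finset.sum_range_succ, Finset.sum_range_succ']
  have h1 : ∀ j ∈ Finset.range n,
      c * ((n.factorial / j.factorial : ℝ) * t ^ j / c ^ (n + 1 - j))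
        = (n.factorial / (j+1).factorial : ℝ) * (((j:ℝ)+1) * t ^ j) / c ^ (n + 1 - (j+1)) := by
    intro j hj
    have hj' : j < n := Finset.mem_range.mp hj
    have e1 : n + 1 - j = (n - j) + 1 := by omega
    have e2 : n + 1 - (j + 1) = n - j := by omega
    rw [e1, e2, pow_succ]
    have hf : ((j+1).factorial : ℝ) = ((j:ℝ)+1) * (j.factorial : ℝ) := by
      rw [Nat.factorial_succ]; push_cast; ring
    rw [hf]
    have hfj : (j.factorial : ℝ) ≠ 0 := Nat.cast_ne_zero.mpr (Nat.factorial_ne_zero j)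
    have hcp : (c : ℝ) ^ (n - j) ≠ 0 := pow_ne_zero _ hc
    field_simp
  rw [Finset.sum_congr rfl h1]
  have e3 : n + 1 - n = 1 := by omega
  simp [e3, Nat.cast_zero]
  field_simp

/-- closed form of the upper incomplete gamma integral with integer parameter,
together with integrability. -/
lemma key_both (c : ℝ) (hc : 0 < c) (n : ℕ) (x : ℝ) (hx : 0 ≤ x) :
    MeasureTheory.IntegrableOn (fun t => Real.exp (-(c * t)) * t ^ n) (Set.Ioi x) ∧
    ∫ t in Set.Ioi x, Real.exp (-(c * t)) * t ^ n =
      Real.exp (-(c * x)) * ∑ j ∈ Finset.range (n+1),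
        (n.factorial / j.factorial : ℝ) * x ^ j / c ^ (n + 1 - j) := by
  set S : ℝ → ℝ := fun t => ∑ j ∈ Finset.range (n+1),
      (n.factorial / j.factorial : ℝ) * t ^ j / c ^ (n + 1 - j) with hS
  set g : ℝ → ℝ := fun t => -(Real.exp (-(c * t)) * S t) with hg
  have hderiv : ∀ t ∈ Set.Ici x, HasDerivAt g (Real.exp (-(c * t)) * t ^ n) t := by
    intro t _
    have hE : HasDerivAt (fun t => Real.exp (-(c * t))) (-c * Real.exp (-(c * t))) t := by
      have h1 : HasDerivAt (fun t : ℝ => -(c * t)) (-c) t := by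
        simpa using ((hasDerivAt_id t).const_mul c).fun_neg
      simpa [mul_comm] using h1.exp
    have hSder : HasDerivAt S
        (∑ j ∈ Finset.range (n+1),
          (n.factorial / j.factorial : ℝ) * ((j : ℝ) * t ^ (j - 1)) / c ^ (n + 1 - j)) t := by
      apply HasDerivAt.fun_sum
      intro j _
      simpa using (((hasDerivAt_pow j t).const_mul ((n.factorial / j.factorial : ℝ))).div_const
        (c ^ (n + 1 - j)))
    have := (hE.fun_mul hSder).fun_neg
    refine this.congr_deriv ?_
    have halg := alg_id c t hc.ne' n
    rw [hS]
    beta_reduce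
    rw [← halg]
    ring
  have gpos : ∀ t ∈ Set.Ioi x, 0 ≤ Real.exp (-(c * t)) * t ^ n := by
    intro t ht
    have : 0 < t := lt_of_le_of_lt hx ht
    positivity
  have htend : Filter.Tendsto g Filter.atTop (nhds 0) := by
    have h1 : ∀ t : ℝ, g t = -∑ j ∈ Finset.range (n+1),
        ((n.factorial / j.factorial : ℝ) / c ^ (n + 1 - j)) * (t ^ (j:ℝ) * Real.exp (-(c * t))) := by
      intro t
      rw [hg]
      simp only [Real.rpow_natCast]
      rw [neg_inj, Finset.mul_sum]
      exact Finset.sum_congr rfl fun j _ => by ring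
    rw [funext h1]
    rw [show (0:ℝ) = -∑ j ∈ Finset.range (n+1), (0:ℝ) by simp]
    apply Filter.Tendsto.neg
    apply tendsto_finset_sum
    intro j _
    rw [show (0:ℝ) = ((n.factorial / j.factorial : ℝ) / c ^ (n + 1 - j)) * 0 by simp]
    apply Filter.Tendsto.const_mul
    have := tendsto_rpow_mul_exp_neg_mul_atTop_nhds_zero (j:ℝ) c hc
    simpa [neg_mul] using this
  refine ⟨integrableOn_Ioi_deriv_of_nonneg' hderiv gpos htend, ?_⟩
  rw [integral_Ioi_of_hasDerivAt_of_nonneg' hderiv gpos htend, hg, hS]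
  ring

lemma key_zero (c : ℝ) (hc : 0 < c) (n : ℕ) :
    ∫ t in Set.Ioi (0:ℝ), Real.exp (-(c * t)) * t ^ n = (n.factorial : ℝ) / c ^ (n + 1) := by
  rw [(key_both c hc n 0 le_rfl).2]
  rw [Finset.sum_eq_single 0]
  · simp
  · intro k _ hk
    simp [zero_pow hk]
  · simp

/-- The nested double integral
`∫_0^∞ e^{-(1+a₂)λ₂} λ₂^{β₂} (∫_{λ₂}^∞ e^{-(1+a₁)λ₁} λ₁^{β₁} dλ₁) dλ₂`
equals `(β₁!/(1+a₁)^{β₁+1}) Σ_{i=0}^{β₁} ((i+β₂)!/i!) (1+a₁)^i / (2+a₁+a₂)^{β₂+i+1}`. -/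
theorem nested_double_integral (a₁ a₂ : ℝ) (ha₁ : 0 ≤ a₁) (ha₂ : 0 ≤ a₂) (β₁ β₂ : ℕ) :
    ∫ lam₂ in Set.Ioi (0 : ℝ),
        Real.exp (-((1 + a₂) * lam₂)) * lam₂ ^ β₂ *
          ∫ lam₁ in Set.Ioi lam₂, Real.exp (-((1 + a₁) * lam₁)) * lam₁ ^ β₁ =
      (Nat.factorial β₁ : ℝ) / (1 + a₁) ^ (β₁ + 1) *
        ∑ i ∈ Finset.range (β₁ + 1),
          ((Nat.factorial (i + β₂) : ℝ) / (Nat.factorial i : ℝ)) *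
            (1 + a₁) ^ i / (2 + a₁ + a₂) ^ (β₂ + i + 1) := by
  have hc₁ : (0:ℝ) < 1 + a₁ := by linarith
  have hd : (0:ℝ) < 2 + a₁ + a₂ := by linarith
  have hcongr : ∀ lam ∈ Set.Ioi (0:ℝ),
      Real.exp (-((1 + a₂) * lam)) * lam ^ β₂ *
          (∫ lam₁ in Set.Ioi lam, Real.exp (-((1 + a₁) * lam₁)) * lam₁ ^ β₁)
        = ∑ j ∈ Finset.range (β₁ + 1),
            ((β₁.factorial / j.factorial : ℝ) / (1 + a₁) ^ (β₁ + 1 - j)) *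
              (Real.exp (-((2 + a₁ + a₂) * lam)) * lam ^ (β₂ + j)) := by
    intro lam hlam
    rw [(key_both (1 + a₁) hc₁ β₁ lam (le_of_lt hlam)).2, Finset.mul_sum, Finset.mul_sum]
    refine Finset.sum_congr rfl fun j _ => ?_
    have hexp : Real.exp (-((1 + a₂) * lam)) * Real.exp (-((1 + a₁) * lam))
        = Real.exp (-((2 + a₁ + a₂) * lam)) := by
      rw [← Real.exp_add]; ring_nf
    rw [← hexp]
    ring
  rw [MeasureTheory.setIntegral_congr_fun measurableSet_Ioi hcongr]
  rw [MeasureTheory.integral_finset_sum]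
  · have hval : ∀ j ∈ Finset.range (β₁ + 1),
        (∫ lam in Set.Ioi (0:ℝ),
          ((β₁.factorial / j.factorial : ℝ) / (1 + a₁) ^ (β₁ + 1 - j)) *
            (Real.exp (-((2 + a₁ + a₂) * lam)) * lam ^ (β₂ + j)))
        = ((β₁.factorial / j.factorial : ℝ) / (1 + a₁) ^ (β₁ + 1 - j)) *
            (((β₂ + j).factorial : ℝ) / (2 + a₁ + a₂) ^ (β₂ + j + 1)) := by
      intro j _
      rw [MeasureTheory.integral_const_mul, key_zero _ hd]
    rw [Finset.sum_congr rfl hval, Finset.mul_sum]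
    refine Finset.sum_congr rfl fun j hj => ?_
    have hj' : j ≤ β₁ := by simpa [Nat.lt_succ_iff] using hj
    have hpow : (1 + a₁) ^ (β₁ + 1) = (1 + a₁) ^ (β₁ + 1 - j) * (1 + a₁) ^ j := by
      rw [← pow_add]; congr 1; omega
    have hfac : ((β₂ + j).factorial : ℝ) = ((j + β₂).factorial : ℝ) := by rw [Nat.add_comm]
    rw [hfac, hpow]
    have h1 : ((j.factorial : ℝ)) ≠ 0 := Nat.cast_ne_zero.mpr (Nat.factorial_ne_zero j)
    have h2 : (1 + a₁) ^ (β₁ + 1 - j) ≠ 0 := pow_ne_zero _ hc₁.ne'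
    have h3 : (1 + a₁) ^ j ≠ 0 := pow_ne_zero _ hc₁.ne'
    have h4 : (2 + a₁ + a₂) ^ (β₂ + j + 1) ≠ 0 := pow_ne_zero _ hd.ne'
    field_simp
  · intro j _
    exact ((key_both (2 + a₁ + a₂) hd (β₂ + j) 0 le_rfl).1).const_mul _
end
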